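/- Let (χ_k) be the Haar system on [0,1] and let δ > 0. Then for every function f ∈ Lip1 on [0,1], the series Σ_{k=1}^∞ |c_k(f)| · k^{1/2} / (log(k+1))^{1+δ} converges, where c_k(f) = ∫_0^1 f(x)χ_k(x) dx. -/

import Mathlib

open MeasureTheory Set Filter

noncomputable section

/-- The Haar system on `[0,1]`: `haarFn 1 = 1`, and for `k = 2^s + l` with
`s ≥ 0`, `1 ≤ l ≤ 2^s`, it takes the values `2^{s/2}`, `-2^{s/2}`, `0` on the
corresponding intervals. -/
def haarFn (k : ℕ) (x : ℝ) : ℝ :=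
  if k = 0 then 0
  else if k = 1 then 1
  else
    let s := Nat.log 2 (k - 1)
    let l := k - 2 ^ s
    if (2 * (l:ℝ) - 2) / 2 ^ (s + 1) < x ∧ x < (2 * (l:ℝ) - 1) / 2 ^ (s + 1) then
      Real.sqrt (2 ^ s)
    else if (2 * (l:ℝ) - 1) / 2 ^ (s + 1) < x ∧ x < (2 * (l:ℝ)) / 2 ^ (s + 1) then
      -Real.sqrt (2 ^ s)
    else 0

/-- `f` belongs to the class Lip 1 on `[0,1]`. -/
def Lip1 (f : ℝ → ℝ) : Prop :=
  ∃ M > (0:ℝ), ∀ x ∈ Icc (0:ℝ) 1, ∀ y ∈ Icc (0:ℝ) 1, |f x - f y| ≤ M * |x - y|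

/-!
For `k = 2 ^ s + l` the Haar function is `2 ^ (s/2)` on an interval `I` of length
`h = 2 ^ -(s+1)` and `-2 ^ (s/2)` on the adjacent interval `I + h`. Shifting the second integral
onto `I`, the coefficient of a Lipschitz function `f` becomes `2 ^ (s/2) ∫_I (f x - f (x + h))`,
of size at most `M 2 ^ (s/2) h ^ 2 ≲ M k ^ (-3/2)`. The series is therefore dominated by the
Bertrand series `∑ 1 / (k log (k + 1) ^ (1 + δ))`, which converges by Cauchy condensation.
-/
open scoped NNReal

def haarStep (a h r : ℝ) (x : ℝ) : ℝ :=
  if x ∈ Ioo a (a + h) then r else if x ∈ Ioo (a + h) (a + 2 * h) then -r else 0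

lemma haarFn_two_pow_add {s l : ℕ} (hl₀ : 1 ≤ l) (hl : l ≤ 2 ^ s) :
    haarFn (2 ^ s + l) = haarStep ((l - 1) / 2 ^ s) (1 / 2 ^ (s + 1)) √(2 ^ s) := by
  have hlog : Nat.log 2 (2 ^ s + l - 1) = s :=
    Nat.log_eq_of_pow_le_of_lt_pow (by omega) (by rw [pow_succ]; omega)
  have hl' : ((2 ^ s + l - 2 ^ s : ℕ) : ℝ) = l := by rw [Nat.add_sub_cancel_left]
  have e₁ : (2 * (l : ℝ) - 2) / 2 ^ (s + 1) = (l - 1) / 2 ^ s := by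
    rw [pow_succ]; field_simp
  have e₂ : (2 * (l : ℝ) - 1) / 2 ^ (s + 1) = (l - 1) / 2 ^ s + 1 / 2 ^ (s + 1) := by
    rw [pow_succ]; field_simp; ring
  have e₃ : 2 * (l : ℝ) / 2 ^ (s + 1) = (l - 1) / 2 ^ s + 2 * (1 / 2 ^ (s + 1)) := by
    rw [pow_succ]; field_simp; ring
  ext x
  simp only [haarFn, haarStep, mem_Ioo, hlog, hl', e₁, e₂, e₃]
  rw [if_neg (by positivity), if_neg (by have := Nat.one_le_two_pow (n := s); omega)]

lemma intervalIntegral_indicator_Ioo {g : ℝ → ℝ} {b c p q : ℝ} (hbp : b ≤ p) (hpq : p ≤ q)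
    (hqc : q ≤ c) : ∫ x in b..c, (Ioo p q).indicator g x = ∫ x in p..q, g x := by
  rw [intervalIntegral.integral_of_le (hbp.trans (hpq.trans hqc)),
    intervalIntegral.integral_of_le hpq, setIntegral_indicator measurableSet_Ioo,
    inter_eq_right.2 ((Ioo_subset_Ioo hbp hqc).trans Ioo_subset_Ioc_self),
    integral_Ioc_eq_integral_Ioo]

lemma integral_mul_haarStep {f : ℝ → ℝ} {a h r b c : ℝ} (hf : IntervalIntegrable f volume b c)
    (hh : 0 ≤ h) (hba : b ≤ a) (hac : a + 2 * h ≤ c) :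
    ∫ x in b..c, f x * haarStep a h r x =
      r * ((∫ x in a..a + h, f x) - ∫ x in a + h..a + 2 * h, f x) := by
  have hsplit : (fun x => f x * haarStep a h r x) = fun x =>
      (Ioo a (a + h)).indicator (fun x => r * f x) x -
        (Ioo (a + h) (a + 2 * h)).indicator (fun x => r * f x) x := by
    ext x
    by_cases h₁ : x ∈ Ioo a (a + h)
    · have h₂ : x ∉ Ioo (a + h) (a + 2 * h) := fun h₂ => by linarith [h₁.2, h₂.1]
      rw [haarStep, if_pos h₁, indicator_of_mem h₁, indicator_of_notMem h₂]
      ring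
    by_cases h₂ : x ∈ Ioo (a + h) (a + 2 * h)
    · rw [haarStep, if_neg h₁, if_pos h₂, indicator_of_notMem h₁, indicator_of_mem h₂]
      ring
    · rw [haarStep, if_neg h₁, if_neg h₂, indicator_of_notMem h₁, indicator_of_notMem h₂]
      ring
  have hrf : IntervalIntegrable (fun x => r * f x) volume b c := hf.const_mul r
  have hind {p q : ℝ} : IntervalIntegrable ((Ioo p q).indicator fun x => r * f x) volume b c :=
    ⟨hrf.1.indicator measurableSet_Ioo, hrf.2.indicator measurableSet_Ioo⟩
  rw [hsplit, intervalIntegral.integral_sub hind hind,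
    intervalIntegral_indicator_Ioo hba (by linarith) (by linarith),
    intervalIntegral_indicator_Ioo (by linarith) (by linarith) hac,
    intervalIntegral.integral_const_mul, intervalIntegral.integral_const_mul, mul_sub]

lemma abs_integral_sub_integral_le_of_lipschitzOnWith {f : ℝ → ℝ} {K : ℝ≥0} {a h : ℝ}
    (hh : 0 ≤ h) (hf : LipschitzOnWith K f (Icc a (a + 2 * h))) :
    |(∫ x in a..a + h, f x) - ∫ x in a + h..a + 2 * h, f x| ≤ K * h ^ 2 := by
  have hshift : ∫ x in a + h..a + 2 * h, f x = ∫ x in a..a + h, f (x + h) := by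
    rw [intervalIntegral.integral_comp_add_right]; ring_nf
  have hint₁ : IntervalIntegrable f volume a (a + h) :=
    (hf.continuousOn.mono (Icc_subset_Icc le_rfl (by linarith))).intervalIntegrable_of_Icc
      (by linarith)
  have hint₂ : IntervalIntegrable (fun x => f (x + h)) volume a (a + h) := by
    refine ContinuousOn.intervalIntegrable_of_Icc (by linarith) ?_
    exact hf.continuousOn.comp (continuous_add_const h).continuousOn
      fun x hx => ⟨by linarith [hx.1], by linarith [hx.2]⟩
  have hpt : ∀ x ∈ uIoc a (a + h), ‖f x - f (x + h)‖ ≤ K * h := fun x hx => by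
    rw [uIoc_of_le (by linarith)] at hx
    have := hf.dist_le_mul x ⟨hx.1.le, by linarith [hx.2]⟩ (x + h)
      ⟨by linarith [hx.1], by linarith [hx.2]⟩
    rwa [Real.dist_eq, Real.dist_eq, sub_add_cancel_left, abs_neg, abs_of_nonneg hh] at this
  rw [hshift, ← intervalIntegral.integral_sub hint₁ hint₂, ← Real.norm_eq_abs]
  calc _ ≤ K * h * |a + h - a| := intervalIntegral.norm_integral_le_of_norm_le_const hpt
    _ = K * h ^ 2 := by rw [add_sub_cancel_left, abs_of_nonneg hh]; ring

lemma abs_integral_mul_haarFn_two_pow_add_le {f : ℝ → ℝ} {K : ℝ≥0}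
    (hf : LipschitzOnWith K f (Icc 0 1)) {s l : ℕ} (hl₀ : 1 ≤ l) (hl : l ≤ 2 ^ s) :
    |∫ x in (0:ℝ)..1, f x * haarFn (2 ^ s + l) x| ≤ √(2 ^ s) * (K * (1 / 2 ^ (s + 1)) ^ 2) := by
  have hN : (0 : ℝ) < 2 ^ s := by positivity
  have hl₀' : (1 : ℝ) ≤ l := by exact_mod_cast hl₀
  have hl' : (l : ℝ) ≤ 2 ^ s := by exact_mod_cast hl
  have ha : 0 ≤ ((l : ℝ) - 1) / 2 ^ s := div_nonneg (by linarith) hN.le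
  have hah : ((l : ℝ) - 1) / 2 ^ s + 2 * (1 / 2 ^ (s + 1)) ≤ 1 := by
    rw [pow_succ, ← sub_nonneg]; field_simp; linarith
  rw [haarFn_two_pow_add hl₀ hl,
    integral_mul_haarStep (hf.continuousOn.intervalIntegrable_of_Icc zero_le_one) (by positivity)
      ha hah, abs_mul, abs_of_nonneg (Real.sqrt_nonneg _)]
  exact mul_le_mul_of_nonneg_left (abs_integral_sub_integral_le_of_lipschitzOnWith
    (by positivity) (hf.mono (Icc_subset_Icc ha hah))) (Real.sqrt_nonneg _)

lemma abs_integral_mul_haarFn_mul_sqrt_le {f : ℝ → ℝ} {K : ℝ≥0}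
    (hf : LipschitzOnWith K f (Icc 0 1)) {n : ℕ} (hn : 2 ≤ n) :
    |∫ x in (0:ℝ)..1, f x * haarFn n x| * √n ≤ K / n := by
  obtain ⟨s, l, hl₀, hl, rfl⟩ : ∃ s l, 1 ≤ l ∧ l ≤ 2 ^ s ∧ n = 2 ^ s + l := by
    have h₁ := Nat.pow_log_le_self 2 (show n - 1 ≠ 0 by omega)
    have h₂ := Nat.lt_pow_succ_log_self one_lt_two (n - 1)
    rw [pow_succ] at h₂
    exact ⟨Nat.log 2 (n - 1), n - 2 ^ Nat.log 2 (n - 1), by omega, by omega, by omega⟩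
  set N : ℝ := 2 ^ s
  have hN : 0 < N := by positivity
  have hn' : ((2 ^ s + l : ℕ) : ℝ) ≤ 2 * N := by
    have : 2 ^ s + l ≤ 2 * 2 ^ s := by omega
    simpa [N] using (Nat.cast_le (α := ℝ)).2 this
  have hn₀ : (0 : ℝ) < (2 ^ s + l : ℕ) := by positivity
  have hsqrt : √N * √(2 ^ s + l : ℕ) ≤ 2 * N := by
    rw [← Real.sqrt_mul hN.le]
    exact Real.sqrt_le_iff.mpr ⟨by positivity, by nlinarith⟩
  calc |∫ x in (0:ℝ)..1, f x * haarFn (2 ^ s + l) x| * √(2 ^ s + l : ℕ)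
      ≤ √N * (K * (1 / (2 * N)) ^ 2) * √(2 ^ s + l : ℕ) := by
        rw [show 2 * N = 2 ^ (s + 1) by rw [pow_succ, mul_comm]]
        gcongr
        exact abs_integral_mul_haarFn_two_pow_add_le hf hl₀ hl
    _ = K * (√N * √(2 ^ s + l : ℕ)) / (4 * N ^ 2) := by field_simp; ring
    _ ≤ K * (2 * N) / (4 * N ^ 2) := by gcongr
    _ = K / (2 * N) := by field_simp; ring
    _ ≤ K / (2 ^ s + l : ℕ) := by gcongr

lemma summable_one_div_nat_mul_log_rpow {p : ℝ} (hp : 1 < p) :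
    Summable fun n : ℕ => 1 / (n * Real.log (n + 1) ^ p) := by
  have hlog (n : ℕ) : 0 ≤ Real.log (n + 1) :=
    Real.log_nonneg (by linarith [n.cast_nonneg (α := ℝ)])
  have hnonneg (n : ℕ) : 0 ≤ 1 / ((n : ℝ) * Real.log (n + 1) ^ p) := by
    have := hlog n; positivity
  rw [← summable_condensed_iff_of_nonneg hnonneg fun m n hm hmn => ?anti]
  case anti =>
    have hm' : (1 : ℝ) ≤ m := by exact_mod_cast hm
    have hmn' : (m : ℝ) ≤ n := by exact_mod_cast hmn
    have : 0 < Real.log (m + 1) := Real.log_pos (by linarith)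
    gcongr
  have hlog2 : 0 < Real.log 2 := Real.log_pos one_lt_two
  refine Summable.of_norm_bounded_eventually_nat
    ((Real.summable_one_div_nat_rpow.2 hp).mul_left (1 / Real.log 2 ^ p)) ?_
  filter_upwards [eventually_ge_atTop 1] with k hk
  have hk' : (1 : ℝ) ≤ k := by exact_mod_cast hk
  have hlower : k * Real.log 2 ≤ Real.log ((2 ^ k : ℕ) + 1) := by
    rw [← Real.log_pow]
    exact Real.log_le_log (by positivity) (by push_cast; linarith)
  rw [Real.norm_of_nonneg (by have := hnonneg (2 ^ k); positivity)]
  calc (2 : ℝ) ^ k * (1 / ((2 ^ k : ℕ) * Real.log ((2 ^ k : ℕ) + 1) ^ p))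
      = 1 / Real.log ((2 ^ k : ℕ) + 1) ^ p := by push_cast; field_simp
    _ ≤ 1 / (k * Real.log 2) ^ p := by gcongr
    _ = 1 / Real.log 2 ^ p * (1 / (k : ℝ) ^ p) := by
        rw [Real.mul_rpow (by positivity) hlog2.le]; ring

lemma Lip1.exists_lipschitzOnWith {f : ℝ → ℝ} (hf : Lip1 f) :
    ∃ K : ℝ≥0, LipschitzOnWith K f (Icc 0 1) := by
  obtain ⟨M, hM, hLip⟩ := hf
  refine ⟨M.toNNReal, LipschitzOnWith.of_dist_le_mul fun x hx y hy => ?_⟩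
  rw [Real.dist_eq, Real.dist_eq, Real.coe_toNNReal M hM.le]
  exact hLip x hx y hy

theorem statement3 (δ : ℝ) (hδ : 0 < δ) (f : ℝ → ℝ) (hf : Lip1 f) :
    Summable (fun k : ℕ =>
      |∫ x in (0:ℝ)..1, f x * haarFn (k + 1) x| * Real.sqrt ((k:ℝ) + 1) /
        Real.log ((k:ℝ) + 2) ^ ((1:ℝ) + δ)) := by
  obtain ⟨K, hK⟩ := hf.exists_lipschitzOnWith
  have hbound := ((summable_nat_add_iff 1).2
    (summable_one_div_nat_mul_log_rpow (lt_add_of_pos_right 1 hδ))).mul_left (K : ℝ)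
  refine Summable.of_norm_bounded_eventually_nat hbound ?_
  filter_upwards [eventually_ge_atTop 1] with k hk
  have hcoef := abs_integral_mul_haarFn_mul_sqrt_le hK (n := k + 1) (by omega)
  have hlog : 0 < Real.log ((k : ℝ) + 2) := Real.log_pos (by linarith [k.cast_nonneg (α := ℝ)])
  push_cast at hcoef ⊢
  rw [Real.norm_of_nonneg (by positivity), show (k : ℝ) + 1 + 1 = k + 2 by ring, mul_one_div,
    ← div_div]
  gcongr
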